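/- arXiv:1709.05803 — 3 statements merged into one kernel-verified Lean document; each statement's English description precedes it below -/
import Mathlib

section
/- The composition βγ of β(x) = (−x₁,1/2−x₂,x₃,x₄,−x₅,−x₆,x₇) and γ(x) = (1/2−x₁,x₂,1/2−x₃,x₄,−x₅,x₆,−x₇) on T^7 = ℝ^7/ℤ^7 has no fixed points. -/
noncomputable section

/-- The circle group ℝ/ℤ. -/
abbrev Circle1 := AddCircle (1 : ℝ)

/-- The 7-torus T⁷ = ℝ⁷/ℤ⁷. -/
abbrev T7 := Fin 7 → Circle1

/-- The class of 1/2 in ℝ/ℤ. -/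
def half : Circle1 := ((1/2 : ℝ) : Circle1)

/-- α(x) = (−x₁,−x₂,−x₃,−x₄,x₅,x₆,x₇). -/
def alphaMap (x : T7) : T7 := ![-x 0, -x 1, -x 2, -x 3, x 4, x 5, x 6]

/-- β(x) = (−x₁,1/2−x₂,x₃,x₄,−x₅,−x₆,x₇). -/
def betaMap (x : T7) : T7 := ![-x 0, half - x 1, x 2, x 3, -x 4, -x 5, x 6]

/-- γ(x) = (1/2−x₁,x₂,1/2−x₃,x₄,−x₅,x₆,−x₇). -/
def gammaMap (x : T7) : T7 := ![half - x 0, x 1, half - x 2, x 3, -x 4, x 5, -x 6]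

lemma half_ne_zero : half ≠ 0 := by
  simp only [half, ne_eq, AddCircle.coe_eq_zero_iff]
  rintro ⟨n, hn⟩
  have : (n : ℝ) = 1/2 := by simpa using hn
  have h2 : ((2*n : ℤ) : ℝ) = 1 := by push_cast; linarith
  have h3 : (2*n : ℤ) = 1 := by exact_mod_cast h2
  omega

/-- βγ has no fixed points. -/
theorem betaGamma_no_fixed_points : ∀ x : T7, betaMap (gammaMap x) ≠ x := by
  intro x h
  have h0 := congrFun h 0
  simp [betaMap, gammaMap] at h0
  exact half_ne_zero h0
end
end

section
/- Every element of the group Γ ≅ (ℤ/2)³ generated by α, β, γ on T^7 other than the identity and the three generators α, β, γ acts on T^7 without fixed points. -/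
noncomputable section

lemma key {a : Circle1} (h : -(half - a) = a) : False := by
  rw [neg_sub, sub_eq_self] at h
  exact half_ne_zero h

/-- the four non-identity, non-generator elements αβ, βγ, αγ, αβγ
of Γ all act on T⁷ without fixed points. -/
theorem nongenerators_no_fixed_points :
    (∀ x : T7, alphaMap (betaMap x) ≠ x) ∧
    (∀ x : T7, betaMap (gammaMap x) ≠ x) ∧
    (∀ x : T7, alphaMap (gammaMap x) ≠ x) ∧
    (∀ x : T7, alphaMap (betaMap (gammaMap x)) ≠ x) := by
  refine ⟨fun x h => ?_, fun x h => ?_, fun x h => ?_, fun x h => ?_⟩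
  · have := congrFun h 1
    simp only [alphaMap, betaMap, Matrix.cons_val_one, Matrix.head_cons,
      Matrix.cons_val_zero] at this
    exact key this
  · have := congrFun h 0
    simp only [betaMap, gammaMap, Matrix.cons_val_zero] at this
    exact key this
  · have := congrFun h 0
    simp only [alphaMap, gammaMap, Matrix.cons_val_zero] at this
    exact key this
  · have := congrFun h 1
    simp only [alphaMap, betaMap, gammaMap, Matrix.cons_val_one, Matrix.head_cons,
      Matrix.cons_val_zero] at this
    exact key this
end
end

section
/- The 16 fixed 3-tori of α, labeled by (θ₁,θ₂,θ₃,θ₄) ∈ {0,1/2}⁴, are permuted by β and γ, and under the induced action of Γ/⟨α⟩ ≅ (ℤ/2)² on the 16 labels each orbit has exactly 4 elements; hence there are exactly 4 orbits. -/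
noncomputable section

/-- Labels of the 16 fixed 3-tori of α: quadruples with entries in {0, 1/2}. -/
def Labels : Set (Fin 4 → Circle1) := {θ | ∀ i, θ i = 0 ∨ θ i = half}

/-- Action of β on the labels: (θ₁,θ₂,θ₃,θ₄) ↦ (θ₁, θ₂+1/2, θ₃, θ₄). -/
def betaLabel (θ : Fin 4 → Circle1) : Fin 4 → Circle1 :=
  ![θ 0, θ 1 + half, θ 2, θ 3]

/-- Action of γ on the labels: (θ₁,θ₂,θ₃,θ₄) ↦ (θ₁+1/2, θ₂, θ₃+1/2, θ₄). -/
def gammaLabel (θ : Fin 4 → Circle1) : Fin 4 → Circle1 :=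
  ![θ 0 + half, θ 1, θ 2 + half, θ 3]

/-- The orbit of a label under the (ℤ/2)²-action generated by β and γ. -/
def labelOrbit (θ : Fin 4 → Circle1) : Set (Fin 4 → Circle1) :=
  {θ, betaLabel θ, gammaLabel θ, betaLabel (gammaLabel θ)}

lemma half_add_half : half + half = 0 := by
  rw [half, ← AddCircle.coe_add]
  norm_num

@[simp] lemma beta0 (θ) : betaLabel θ 0 = θ 0 := rfl
@[simp] lemma beta1 (θ) : betaLabel θ 1 = θ 1 + half := rfl
@[simp] lemma beta2 (θ) : betaLabel θ 2 = θ 2 := rfl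
@[simp] lemma beta3 (θ) : betaLabel θ 3 = θ 3 := rfl
@[simp] lemma gamma0 (θ) : gammaLabel θ 0 = θ 0 + half := rfl
@[simp] lemma gamma1 (θ) : gammaLabel θ 1 = θ 1 := rfl
@[simp] lemma gamma2 (θ) : gammaLabel θ 2 = θ 2 + half := rfl
@[simp] lemma gamma3 (θ) : gammaLabel θ 3 = θ 3 := rfl

lemma add_half_ne (x : Circle1) : x + half ≠ x := by
  intro h
  exact half_ne_zero (by simpa using h)

lemma beta_beta (θ) : betaLabel (betaLabel θ) = θ := by
  funext i; fin_cases i <;> simp [add_assoc, half_add_half]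

lemma gamma_gamma (θ) : gammaLabel (gammaLabel θ) = θ := by
  funext i; fin_cases i <;> simp [add_assoc, half_add_half]

lemma beta_gamma (θ) : betaLabel (gammaLabel θ) = gammaLabel (betaLabel θ) := by
  funext i; fin_cases i <;> simp

lemma ncard4 {α : Type*} {a b c d : α} (hab : a ≠ b) (hac : a ≠ c) (had : a ≠ d)
    (hbc : b ≠ c) (hbd : b ≠ d) (hcd : c ≠ d) : ({a, b, c, d} : Set α).ncard = 4 := by
  rw [Set.ncard_insert_of_notMem (by simp [hab, hac, had]) (Set.toFinite _),
    Set.ncard_insert_of_notMem (by simp [hbc, hbd]) (Set.toFinite _),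
    Set.ncard_insert_of_notMem (by simp [hcd]) (Set.toFinite _),
    Set.ncard_singleton]

lemma orbit_card (θ : Fin 4 → Circle1) : (labelOrbit θ).ncard = 4 := by
  apply ncard4
  · intro h; exact add_half_ne (θ 1) (congrFun h 1).symm
  · intro h; exact add_half_ne (θ 0) (congrFun h 0).symm
  · intro h; exact add_half_ne (θ 0) (by simpa using (congrFun h 0).symm)
  · intro h; exact add_half_ne (θ 0) (by simpa using (congrFun h 0).symm)
  · intro h; exact add_half_ne (θ 0) (by simpa using (congrFun h 0).symm)
  · intro h; exact add_half_ne (θ 1) (by simpa using (congrFun h 1).symm)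

lemma orbit_beta (θ) : labelOrbit (betaLabel θ) = labelOrbit θ := by
  have h2 : gammaLabel (betaLabel θ) = betaLabel (gammaLabel θ) := (beta_gamma θ).symm
  have h3 : betaLabel (gammaLabel (betaLabel θ)) = gammaLabel θ := by
    rw [← beta_gamma, beta_gamma θ, beta_gamma, beta_beta]
  unfold labelOrbit
  rw [h3, h2, beta_beta]
  ext x; simp; tauto

lemma orbit_gamma (θ) : labelOrbit (gammaLabel θ) = labelOrbit θ := by
  have h3 : betaLabel (gammaLabel (gammaLabel θ)) = betaLabel θ := by rw [gamma_gamma]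
  unfold labelOrbit
  rw [h3, gamma_gamma]
  ext x; simp; tauto

/-- invariant: x ∈ orbit θ → x0+x2 = θ0+θ2 and x3 = θ3 -/
lemma orbit_inv {θ x : Fin 4 → Circle1} (hx : x ∈ labelOrbit θ) :
    x 0 + x 2 = θ 0 + θ 2 ∧ x 3 = θ 3 := by
  have key : θ 0 + half + (θ 2 + half) = θ 0 + θ 2 := by
    rw [add_add_add_comm, half_add_half, add_zero]
  rcases hx with h | h | h | h <;> subst h
  · exact ⟨rfl, rfl⟩
  · exact ⟨rfl, rfl⟩
  · exact ⟨key, rfl⟩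
  · exact ⟨key, rfl⟩

def rep (a b : Circle1) : Fin 4 → Circle1 := ![0, 0, a, b]

lemma reduce {θ : Fin 4 → Circle1} (h0 : θ 0 = 0 ∨ θ 0 = half)
    (h1 : θ 1 = 0 ∨ θ 1 = half) :
    labelOrbit θ = labelOrbit (rep (θ 0 + θ 2) (θ 3)) := by
  have key : ∀ y : Circle1, half + y + half = y := fun y => by
    rw [add_comm half y, add_assoc, half_add_half, add_zero]
  rcases h0 with h0 | h0 <;> rcases h1 with h1 | h1
  · have hθ : θ = rep (θ 0 + θ 2) (θ 3) := by
      funext i; fin_cases i <;> simp [rep, h0, h1]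
    conv_lhs => rw [hθ]
  · have hθ : θ = betaLabel (rep (θ 0 + θ 2) (θ 3)) := by
      funext i; fin_cases i <;> simp [rep, h0, h1]
    conv_lhs => rw [hθ]
    rw [orbit_beta]
  · have hθ : θ = gammaLabel (rep (θ 0 + θ 2) (θ 3)) := by
      funext i; fin_cases i <;> simp [rep, h0, h1, key]
    conv_lhs => rw [hθ]
    rw [orbit_gamma]
  · have hθ : θ = betaLabel (gammaLabel (rep (θ 0 + θ 2) (θ 3))) := by
      funext i; fin_cases i <;> simp [rep, h0, h1, key]
    conv_lhs => rw [hθ]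
    rw [orbit_beta, orbit_gamma]

lemma rep_mem_labels {a b : Circle1} (ha : a = 0 ∨ a = half) (hb : b = 0 ∨ b = half) :
    rep a b ∈ Labels := by
  intro i; fin_cases i <;> simp [rep] <;> tauto

lemma rep_inj {a b a' b' : Circle1} (h : labelOrbit (rep a b) = labelOrbit (rep a' b')) :
    a = a' ∧ b = b' := by
  have hm : rep a b ∈ labelOrbit (rep a' b') := by
    rw [← h]; exact Set.mem_insert _ _
  have := orbit_inv hm
  simpa [rep] using this

/-- every orbit of the induced Γ/⟨α⟩ ≅ (ℤ/2)²-action on the 16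
labels has exactly 4 elements, and there are exactly 4 orbits. -/
theorem label_orbits :
    (∀ θ ∈ Labels, (labelOrbit θ).ncard = 4) ∧
    {s : Set (Fin 4 → Circle1) | ∃ θ ∈ Labels, s = labelOrbit θ}.ncard = 4 := by
  constructor
  · intro θ _; exact orbit_card θ
  · have hset : {s : Set (Fin 4 → Circle1) | ∃ θ ∈ Labels, s = labelOrbit θ} =
        {labelOrbit (rep 0 0), labelOrbit (rep 0 half),
         labelOrbit (rep half 0), labelOrbit (rep half half)} := by
      ext s
      constructor
      · rintro ⟨θ, hθ, rfl⟩
        have h02 : θ 0 + θ 2 = 0 ∨ θ 0 + θ 2 = half := by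
          rcases hθ 0 with h | h <;> rcases hθ 2 with h' | h' <;>
            simp [h, h', half_add_half]
        rw [reduce (hθ 0) (hθ 1)]
        rcases h02 with h | h <;> rcases hθ 3 with h' | h' <;> rw [h, h'] <;> simp
      · intro hs
        rcases hs with h | h | h | h <;> subst h
        · exact ⟨_, rep_mem_labels (Or.inl rfl) (Or.inl rfl), rfl⟩
        · exact ⟨_, rep_mem_labels (Or.inl rfl) (Or.inr rfl), rfl⟩
        · exact ⟨_, rep_mem_labels (Or.inr rfl) (Or.inl rfl), rfl⟩
        · exact ⟨_, rep_mem_labels (Or.inr rfl) (Or.inr rfl), rfl⟩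
    rw [hset]
    apply ncard4 <;> intro h <;>
      first
      | exact half_ne_zero (rep_inj h).2.symm
      | exact half_ne_zero (rep_inj h).1.symm

end
end
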